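/- For the Dynkin tree D_n (n ≥ 4), the Alexander polynomial satisfies Δ(D_n) = t^{−n/2}(t^n − t^{n−1} + (−1)^{n−1} t + (−1)^n). -/

import Mathlib

open scoped Classical

noncomputable section

abbrev K : Type := FractionRing (MvPolynomial Bool ℚ)

/-- The element `t^{1/2}`. -/
def S : K := algebraMap (MvPolynomial Bool ℚ) K (MvPolynomial.X false)

/-- The variable `t = (t^{1/2})²` of the Alexander polynomial. -/
def T : K := S ^ 2

/-- A rule assigning a value to every finite simple graph. -/
abbrev GraphFun : Type 1 :=
  ∀ (V : Type) [Fintype V] [DecidableEq V], SimpleGraph V → K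

/-- `v` is a leaf whose unique neighbor is `w`. -/
def IsLeaf {V : Type} (G : SimpleGraph V) (v w : V) : Prop :=
  G.neighborSet v = {w}

/-- The defining recursion of the Alexander polynomial of a forest:
value `1` on the empty graph, `t^{1/2} − t^{−1/2}` on a single vertex,
the leaf-removal recursion `Δ(Q) = (t^{1/2}−t^{−1/2})Δ(Q−v) + Δ(Q−{v,ṽ})`,
and multiplicativity over disjoint unions. -/
def AlexRules (f : GraphFun) : Prop :=
  (∀ (V : Type) [Fintype V] [DecidableEq V] (G : SimpleGraph V),
      IsEmpty V → f V G = 1) ∧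
  (∀ (V : Type) [Fintype V] [DecidableEq V] (G : SimpleGraph V),
      Fintype.card V = 1 → f V G = S - S⁻¹) ∧
  (∀ (V : Type) [Fintype V] [DecidableEq V] (G : SimpleGraph V),
      G.IsAcyclic → ∀ v w : V, IsLeaf G v w →
      f V G = (S - S⁻¹) * f ↥{x : V | x ≠ v} (G.induce {x : V | x ≠ v}) +
        f ↥{x : V | x ≠ v ∧ x ≠ w} (G.induce {x : V | x ≠ v ∧ x ≠ w})) ∧
  (∀ (V : Type) [Fintype V] [DecidableEq V] (G : SimpleGraph V),
      G.IsAcyclic → ∀ s : Set V, (∀ x ∈ s, ∀ y ∉ s, ¬ G.Adj x y) →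
      f V G = f ↥s (G.induce s) * f ↥sᶜ (G.induce sᶜ))

/-- The tree `D_n`: a path on vertices `0, …, n−3` together with two extra
leaves `n−2` and `n−1` attached to the end vertex `0` of the path. -/
def Dgraph (n : ℕ) : SimpleGraph (Fin n) :=
  SimpleGraph.fromRel (fun i j =>
    ((i : ℕ) + 1 = (j : ℕ) ∧ (j : ℕ) ≤ n - 3) ∨
    ((i : ℕ) = 0 ∧ (j : ℕ) = n - 2) ∨
    ((i : ℕ) = 0 ∧ (j : ℕ) = n - 1))

/-!
Deleting the leaf `n − 1` of `D_n` leaves a path on `n − 1` vertices; deleting it together with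
its neighbour, the hub `0`, leaves the isolated vertex `n − 2` and a path on `n − 3` vertices.
Paths obey the Fibonacci recursion `Δ(P_{m+2}) = x Δ(P_{m+1}) + Δ(P_m)` with
`x = t^{1/2} − t^{−1/2}`. Writing `x = a + b` with `a = t^{1/2}`, `b = −t^{−1/2}` (so `ab = −1`)
gives the Lucas-type identity `Δ(P_{m+2}) + Δ(P_m) = a^{m+2} + b^{m+2}`, hence
`Δ(D_n) = x (Δ(P_{n−1}) + Δ(P_{n−3})) = x (a^{n−1} + b^{n−1})`, which expands to the formula.
-/

namespace SimpleGraph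

variable {V : Type*} {G : SimpleGraph V}

/-- A vertex of maximal label on a cycle has two distinct smaller neighbours on it. -/
theorem isAcyclic_of_lt_neighbor_unique [LinearOrder V]
    (h : ∀ u a b, G.Adj u a → G.Adj u b → a < u → b < u → a = b) : G.IsAcyclic := by
  intro x c hc
  obtain ⟨u, hu, hmax⟩ := c.support.toFinset.exists_max_image id ⟨x, by simp⟩
  rw [List.mem_toFinset] at hu
  set c' := c.rotate u hu
  have hc' : c'.IsCycle := hc.rotate hu
  have hlt : ∀ a, G.Adj u a → a ∈ c'.support → a < u := fun a hadj ha =>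
    lt_of_le_of_ne (hmax a (by simpa [c', List.mem_toFinset] using ha)) hadj.ne'
  exact hc'.snd_ne_penultimate <| h u _ _ (c'.adj_snd hc'.not_nil)
    (c'.adj_penultimate hc'.not_nil).symm
    (hlt _ (c'.adj_snd hc'.not_nil) (c'.getVert_mem_support _))
    (hlt _ (c'.adj_penultimate hc'.not_nil).symm (c'.getVert_mem_support _))

theorem isAcyclic_pathGraph (m : ℕ) : (pathGraph m).IsAcyclic :=
  isAcyclic_of_lt_neighbor_unique fun u a b ha hb hau hbu => by
    rw [pathGraph_adj] at ha hb
    exact Fin.ext (by omega)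

def Iso.ofBijective {W : Type*} {H : SimpleGraph W} (g : V → W) (hg : g.Bijective)
    (hadj : ∀ a b, H.Adj (g a) (g b) ↔ G.Adj a b) : G ≃g H :=
  ⟨Equiv.ofBijective g hg, hadj _ _⟩

def Iso.pathGraphInduce {m k : ℕ} (e : pathGraph m ≃g G) (hk : k ≤ m) (s : Set V)
    (hs : ∀ i, e i ∈ s ↔ (i : ℕ) < k) : pathGraph k ≃g G.induce s := by
  refine .ofBijective (fun i => ⟨e (Fin.castLE hk i), (hs _).2 i.2⟩)
    ⟨fun i j hij => Fin.castLE_injective hk (e.injective (congrArg Subtype.val hij)), ?_⟩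
    fun i j => e.map_rel_iff.trans (by simp [pathGraph_adj])
  rintro ⟨x, hx⟩
  obtain ⟨i, rfl⟩ := e.surjective x
  exact ⟨⟨i, (hs i).1 hx⟩, rfl⟩

end SimpleGraph

section PathAlexander

variable {R : Type*} [CommRing R]

def pathAlexander (x : R) : ℕ → R
  | 0 => 1
  | 1 => x
  | m + 2 => x * pathAlexander x (m + 1) + pathAlexander x m

theorem pathAlexander_add_two_add {a b : R} (hab : a * b = -1) :
    ∀ m, pathAlexander (a + b) (m + 2) + pathAlexander (a + b) m = a ^ (m + 2) + b ^ (m + 2)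
  | 0 => by
    simp only [pathAlexander]
    linear_combination 2 * hab
  | 1 => by
    simp only [pathAlexander]
    linear_combination 3 * (a + b) * hab
  | m + 2 => by
    have h₀ := pathAlexander_add_two_add hab m
    have h₁ := pathAlexander_add_two_add hab (m + 1)
    calc pathAlexander (a + b) (m + 4) + pathAlexander (a + b) (m + 2)
        = (a + b) * (pathAlexander (a + b) (m + 3) + pathAlexander (a + b) (m + 1)) +
            (pathAlexander (a + b) (m + 2) + pathAlexander (a + b) m) := by
          simp only [pathAlexander]; ring
      _ = a ^ (m + 4) + b ^ (m + 4) := by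
          rw [h₀, h₁]
          linear_combination (a ^ (m + 2) + b ^ (m + 2)) * hab

end PathAlexander

theorem S_ne_zero : S ≠ 0 :=
  (map_ne_zero_iff _ (IsFractionRing.injective (MvPolynomial Bool ℚ) K)).2
    (MvPolynomial.X_ne_zero false)

namespace AlexRules

open SimpleGraph

variable {f : GraphFun}

theorem apply_eq_of_isolated (hf : AlexRules f) {V : Type} [Fintype V] [DecidableEq V]
    {G : SimpleGraph V} (hG : G.IsAcyclic) (u : V) (hu : ∀ w, ¬ G.Adj u w) :
    f V G = (S - S⁻¹) * f _ (G.induce {u}ᶜ) := by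
  rw [hf.2.2.2 V G hG {u} (by rintro x rfl y -; exact hu y)]
  congr 1
  · convert hf.2.1 _ (G.induce {u}) Fintype.card_unique
  · -- the two sides differ only in the `Fintype` instance on `{u}ᶜ`
    congr
    exact Subsingleton.elim _ _

theorem apply_eq_pathAlexander (hf : AlexRules f) :
    ∀ (m : ℕ) {V : Type} [Fintype V] [DecidableEq V] {G : SimpleGraph V},
      (pathGraph m ≃g G) → f V G = pathAlexander (S - S⁻¹) m
  | 0, V, _, _, G, e => hf.1 V G ⟨fun v => (e.symm v).elim0⟩
  | 1, V, _, _, G, e => hf.2.1 V G ((Fintype.card_congr e.toEquiv).symm.trans (Fintype.card_fin 1))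
  | m + 2, V, _, _, G, e => by
    have hleaf : IsLeaf G (e (Fin.last (m + 1))) (e ⟨m, by omega⟩) := by
      ext x
      obtain ⟨i, rfl⟩ := e.surjective x
      simp only [mem_neighborSet, Set.mem_singleton_iff, Iso.map_adj_iff, pathGraph_adj,
        EmbeddingLike.apply_eq_iff_eq, Fin.ext_iff, Fin.val_last]
      omega
    rw [hf.2.2.1 V G (e.isAcyclic_iff.1 (isAcyclic_pathGraph _)) _ _ hleaf,
      hf.apply_eq_pathAlexander (m + 1) (e.pathGraphInduce (by omega) _ fun i => ?_),
      hf.apply_eq_pathAlexander m (e.pathGraphInduce (by omega) _ fun i => ?_)]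
    · rfl
    all_goals
      simp only [Set.mem_ofPred_eq, ne_eq, EmbeddingLike.apply_eq_iff_eq, Fin.ext_iff, Fin.val_last]
      omega

end AlexRules

section Dgraph

open SimpleGraph

variable {n : ℕ}

theorem dgraph_adj {a b : Fin n} :
    (Dgraph n).Adj a b ↔ (a : ℕ) ≠ b ∧
      ((a : ℕ) + 1 = b ∧ (b : ℕ) ≤ n - 3 ∨ (a : ℕ) = 0 ∧ (b : ℕ) = n - 2 ∨
        (a : ℕ) = 0 ∧ (b : ℕ) = n - 1 ∨ (b : ℕ) + 1 = a ∧ (a : ℕ) ≤ n - 3 ∨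
        (b : ℕ) = 0 ∧ (a : ℕ) = n - 2 ∨ (b : ℕ) = 0 ∧ (a : ℕ) = n - 1) := by
  simp only [Dgraph, fromRel_adj, ne_eq, Fin.ext_iff, or_assoc]

theorem isAcyclic_dgraph : (Dgraph n).IsAcyclic :=
  isAcyclic_of_lt_neighbor_unique fun u a b ha hb hau hbu => by
    rw [dgraph_adj] at ha hb
    exact Fin.ext (by omega)

theorem isLeaf_dgraph (hn : 3 ≤ n) : IsLeaf (Dgraph n) ⟨n - 1, by omega⟩ ⟨0, by omega⟩ := by
  ext x
  simp only [mem_neighborSet, Set.mem_singleton_iff, dgraph_adj, Fin.ext_iff, and_true]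
  omega

/-- The path `n − 2, 0, 1, …, n − 3`. -/
def Dgraph.delLeafIso (hn : 3 ≤ n) :
    pathGraph (n - 1) ≃g (Dgraph n).induce {x | x ≠ ⟨n - 1, by omega⟩} := by
  refine .ofBijective
    (fun i => ⟨⟨if (i : ℕ) = 0 then n - 2 else i - 1, by split_ifs <;> omega⟩, by
      simp only [Set.mem_ofPred_eq, ne_eq, Fin.ext_iff]; split_ifs <;> omega⟩)
    ⟨fun i j hij => ?_, ?_⟩ fun i j => ?_
  · simp only [Subtype.mk.injEq, Fin.mk.injEq] at hij
    exact Fin.ext (by split_ifs at hij <;> omega)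
  · rintro ⟨x, hx⟩
    have := x.isLt
    simp only [Set.mem_ofPred_eq, ne_eq, Fin.ext_iff] at hx
    by_cases hx2 : (x : ℕ) = n - 2
    · exact ⟨⟨0, by omega⟩, by simp [hx2, Fin.ext_iff]⟩
    · exact ⟨⟨x + 1, by omega⟩, by simp⟩
  · simp only [induce_adj, dgraph_adj, pathGraph_adj]
    split_ifs <;> omega

def Dgraph.delLeafHubIso (hn : 3 ≤ n) : pathGraph (n - 3) ≃g
    ((Dgraph n).induce {x | x ≠ ⟨n - 1, by omega⟩ ∧ x ≠ ⟨0, by omega⟩}).induce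
      {⟨⟨n - 2, by omega⟩, by simp only [Set.mem_ofPred_eq, ne_eq, Fin.ext_iff]; omega⟩}ᶜ := by
  refine .ofBijective
    (fun i => ⟨⟨⟨i + 1, by omega⟩, by simp only [Set.mem_ofPred_eq, ne_eq, Fin.ext_iff]; omega⟩, by
      simp only [Set.mem_compl_iff, Set.mem_singleton_iff, Subtype.mk.injEq, Fin.ext_iff]; omega⟩)
    ⟨fun i j hij => ?_, ?_⟩ fun i j => ?_
  · simp only [Subtype.mk.injEq, Fin.mk.injEq] at hij
    exact Fin.ext (by omega)
  · rintro ⟨⟨y, hy⟩, hy'⟩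
    simp only [Set.mem_ofPred_eq, ne_eq, Fin.ext_iff] at hy
    simp only [Set.mem_compl_iff, Set.mem_singleton_iff, Subtype.mk.injEq, Fin.ext_iff] at hy'
    exact ⟨⟨y - 1, by omega⟩, by simp only [Subtype.mk.injEq, Fin.ext_iff]; omega⟩
  · simp only [induce_adj, dgraph_adj, pathGraph_adj]
    omega

theorem AlexRules.apply_dgraph_induce_delLeafHub {f : GraphFun} (hf : AlexRules f)
    (hn : 3 ≤ n) :
    f _ ((Dgraph n).induce {x | x ≠ ⟨n - 1, by omega⟩ ∧ x ≠ ⟨0, by omega⟩}) =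
      (S - S⁻¹) * pathAlexander (S - S⁻¹) (n - 3) := by
  rw [hf.apply_eq_of_isolated (isAcyclic_dgraph.induce _) _ ?_,
    hf.apply_eq_pathAlexander _ (Dgraph.delLeafHubIso hn)]
  rintro ⟨y, hy⟩
  simp only [Set.mem_ofPred_eq, ne_eq, Fin.ext_iff] at hy
  simp only [induce_adj, dgraph_adj]
  omega

end Dgraph

/-- `Δ(D_n) = t^{−n/2}(t^n − t^{n−1} + (−1)^{n−1} t + (−1)^n)` for `n ≥ 4`. -/
theorem alexander_Dn (f : GraphFun) (hf : AlexRules f) (n : ℕ) (hn : 4 ≤ n) :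
    f (Fin n) (Dgraph n) =
      (S⁻¹) ^ n * (T ^ n - T ^ (n - 1) + (-1 : K) ^ (n - 1) * T + (-1 : K) ^ n) := by
  have h3 : 3 ≤ n := by omega
  rw [hf.2.2.1 _ _ isAcyclic_dgraph _ _ (isLeaf_dgraph h3),
    hf.apply_eq_pathAlexander _ (Dgraph.delLeafIso h3), hf.apply_dgraph_induce_delLeafHub h3,
    ← mul_add, sub_eq_add_neg S]
  obtain ⟨k, rfl⟩ : ∃ k, n = k + 4 := ⟨n - 4, by omega⟩
  rw [show k + 4 - 1 = k + 1 + 2 by omega, show k + 4 - 3 = k + 1 by omega,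
    pathAlexander_add_two_add (by field_simp [S_ne_zero]), T, neg_pow]
  simp only [inv_pow]
  field_simp [S_ne_zero]
  ring
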